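/- arXiv:math-ph/0204027 — 7 statements merged into one kernel-verified Lean document; each statement's English description precedes it below -/
import Mathlib

section
/- For real constants A ≥ B > 0 and operators b, b† on a Hilbert space (with b₋ₖ, b†₋ₖ a second pair), the operator inequality A(b†b + b₋†b₋) + B(b†b₋† + b b₋) ≥ -(1/2)(A - √(A² - B²))([b, b†] + [b₋, b₋†]) holds, where [x,y] = xy - yx. (Simple case of Bogolubov's method) -/
open scoped InnerProductSpace
open ContinuousLinearMap

/-- **Simple case of Bogolubov's method**: for constants `A ≥ B > 0` and bounded operators
`b`, `bm` on a complex Hilbert space, the operator inequality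
`A(b†b + bm†bm) + B(b†bm† + b bm) ≥ -(1/2)(A - √(A² - B²))([b,b†] + [bm,bm†])` holds,
expressed via expectation values in an arbitrary vector `x`. -/
theorem bogolubov_simple {E : Type*} [NormedAddCommGroup E] [InnerProductSpace ℂ E]
    [CompleteSpace E] (A B : ℝ) (hB : 0 < B) (hAB : B ≤ A) (b bm : E →L[ℂ] E) (x : E) :
    -((1 / 2) * (A - Real.sqrt (A ^ 2 - B ^ 2)) *
        (⟪x, ((b ∘L adjoint b - adjoint b ∘L b)
            + (bm ∘L adjoint bm - adjoint bm ∘L bm)) x⟫_ℂ).re)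
      ≤ (⟪x, ((A : ℂ) • (adjoint b ∘L b + adjoint bm ∘L bm)
          + (B : ℂ) • (adjoint b ∘L adjoint bm + b ∘L bm)) x⟫_ℂ).re := by
  have e1 : ⟪x, (adjoint b) (b x)⟫_ℂ = ⟪b x, b x⟫_ℂ :=
    ContinuousLinearMap.adjoint_inner_right b x (b x)
  have e2 : ⟪x, b ((adjoint b) x)⟫_ℂ = ⟪(adjoint b) x, (adjoint b) x⟫_ℂ := by
    rw [← ContinuousLinearMap.adjoint_inner_left]
  have e3 : ⟪x, (adjoint bm) (bm x)⟫_ℂ = ⟪bm x, bm x⟫_ℂ :=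
    ContinuousLinearMap.adjoint_inner_right bm x (bm x)
  have e4 : ⟪x, bm ((adjoint bm) x)⟫_ℂ = ⟪(adjoint bm) x, (adjoint bm) x⟫_ℂ := by
    rw [← ContinuousLinearMap.adjoint_inner_left]
  have e5 : ⟪x, (adjoint b) ((adjoint bm) x)⟫_ℂ = ⟪b x, (adjoint bm) x⟫_ℂ :=
    ContinuousLinearMap.adjoint_inner_right b x ((adjoint bm) x)
  have e6 : ⟪x, b (bm x)⟫_ℂ = ⟪(adjoint b) x, bm x⟫_ℂ := by
    rw [← ContinuousLinearMap.adjoint_inner_left]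
  simp only [ContinuousLinearMap.add_apply, ContinuousLinearMap.sub_apply,
    ContinuousLinearMap.smul_apply, ContinuousLinearMap.comp_apply,
    inner_add_right, inner_sub_right, inner_smul_right, e1, e2, e3, e4, e5, e6]
  set u := b x
  set v := (adjoint b) x
  set w := bm x
  set z := (adjoint bm) x
  set r := Real.sqrt (A ^ 2 - B ^ 2) with hrdef
  have hr0 : 0 ≤ r := Real.sqrt_nonneg _
  have hr2 : r ^ 2 = A ^ 2 - B ^ 2 := Real.sq_sqrt (by nlinarith)
  have hrA : r < A := by nlinarith
  -- expand real parts
  simp only [Complex.add_re, Complex.sub_re, Complex.mul_re, Complex.ofReal_re,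
    Complex.ofReal_im, zero_mul, sub_zero, Complex.add_im, Complex.sub_im,
    inner_self_im, inner_self_eq_norm_sq]
  -- square completion inequalities
  have h1 : (0:ℝ) ≤ ‖(B:ℂ) • u + ((A - r : ℝ) : ℂ) • z‖ ^ 2 := sq_nonneg _
  have h2 : (0:ℝ) ≤ ‖(B:ℂ) • w + ((A - r : ℝ) : ℂ) • v‖ ^ 2 := sq_nonneg _
  rw [@norm_add_sq ℂ] at h1 h2
  simp only [inner_smul_left, inner_smul_right, norm_smul, Complex.norm_real,
    Complex.mul_re, Complex.conj_re, Complex.conj_im, Complex.ofReal_re, Complex.ofReal_im,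
    zero_mul, mul_zero, sub_zero, neg_zero, Complex.conj_ofReal, Real.norm_eq_abs,
    sq_abs, RCLike.re_to_complex, ← Complex.ofReal_mul, ← mul_assoc,
    Complex.re_ofReal_mul] at h1 h2
  have hn : ∀ y : E, (⟪y, y⟫_ℂ).re = ‖y‖ ^ 2 := fun y => by
    have := inner_self_eq_norm_sq (𝕜 := ℂ) (x := y)
    simpa [RCLike.re_to_complex] using this
  have hsym : (⟪w, v⟫_ℂ).re = (⟪v, w⟫_ℂ).re := by
    rw [← inner_conj_symm, Complex.conj_re]
  rw [hn, hn, hn, hn] 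
  rw [hsym] at h2
  rw [abs_of_pos hB, abs_of_nonneg (by linarith : (0:ℝ) ≤ A - r)] at h1 h2
  set Z1 := (⟪u, z⟫_ℂ).re
  set Z2 := (⟪v, w⟫_ℂ).re
  have key : 2 * B ^ 2 * (A * (‖u‖ ^ 2 + ‖w‖ ^ 2) + B * (Z1 + Z2)
        + 1 / 2 * (A - r) * (‖v‖ ^ 2 - ‖u‖ ^ 2 + (‖z‖ ^ 2 - ‖w‖ ^ 2)))
      = (A + r) * ((B * ‖u‖) ^ 2 + 2 * (A - r) * B * Z1 + ((A - r) * ‖z‖) ^ 2)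
        + (A + r) * ((B * ‖w‖) ^ 2 + 2 * (A - r) * B * Z2 + ((A - r) * ‖v‖) ^ 2) := by
    linear_combination (2 * B * (Z1 + Z2) + (A - r) * (‖v‖ ^ 2 + ‖z‖ ^ 2)) * hr2
  have hE : (0:ℝ) ≤ 2 * B ^ 2 * (A * (‖u‖ ^ 2 + ‖w‖ ^ 2) + B * (Z1 + Z2)
      + 1 / 2 * (A - r) * (‖v‖ ^ 2 - ‖u‖ ^ 2 + (‖z‖ ^ 2 - ‖w‖ ^ 2))) := by
    rw [key]
    have hAr : (0:ℝ) ≤ A + r := by linarith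
    exact add_nonneg (mul_nonneg hAr h1) (mul_nonneg hAr h2)
  have h2B : (0:ℝ) < 2 * B ^ 2 := by positivity
  have hfin := div_nonneg hE h2B.le
  rw [mul_div_cancel_left₀ _ h2B.ne'] at hfin
  linarith
end

section
/- For all real numbers 0 < x < 1, 0 < b < 1 and k ≥ 1, the inequality x²/|ln x| - 2(b/|ln b|)·x·k ≥ -(b²/|ln b|)·(1 + 1/(2|ln b|)²)·k² holds. -/
set_option maxHeartbeats 1000000 in
/-- For all `0 < x < 1`, `0 < b < 1` and `k ≥ 1`:
`x²/|ln x| - 2(b/|ln b|)·x·k ≥ -(b²/|ln b|)·(1 + 1/(2|ln b|)²)·k²`. -/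
theorem twoD_minimization_lemma (x b k : ℝ) (hx0 : 0 < x) (hx1 : x < 1)
    (hb0 : 0 < b) (hb1 : b < 1) (hk : 1 ≤ k) :
    x ^ 2 / |Real.log x| - 2 * (b / |Real.log b|) * x * k ≥
      -(b ^ 2 / |Real.log b|) * (1 + 1 / (2 * |Real.log b|) ^ 2) * k ^ 2 := by
  have hlx : Real.log x < 0 := Real.log_neg hx0 hx1
  have hlb : Real.log b < 0 := Real.log_neg hb0 hb1
  rw [ge_iff_le, abs_of_neg hlx, abs_of_neg hlb]
  set L : ℝ := -Real.log x with hLdef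
  set M : ℝ := -Real.log b with hMdef
  have hL : 0 < L := by simp only [hLdef]; linarith
  have hM : 0 < M := by simp only [hMdef]; linarith
  -- key cleared-denominator inequality
  have key : 0 ≤ 4*x^2*M^3 - 8*b*x*k*L*M^2 + b^2*(4*M^2+1)*L*k^2 := by
    rcases le_or_gt (4*L*M) (4*M^2+1) with hc | hc
    · nlinarith [mul_nonneg hM.le (sq_nonneg (x*M - b*k*L)),
        mul_nonneg (mul_nonneg (sq_nonneg (b*k)) hL.le) (sub_nonneg.2 hc)]
    · -- L > M, hence x < b
      have hML : M < L := by nlinarith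
      have hxb : x < b := by
        have h1 : Real.log x < Real.log b := by
          have : -L < -M := by linarith
          simpa [hLdef, hMdef] using this
        calc x = Real.exp (Real.log x) := (Real.exp_log hx0).symm
          _ < Real.exp (Real.log b) := Real.exp_lt_exp.2 h1
          _ = b := Real.exp_log hb0
      -- reduce to k = 1
      have f2 : 0 ≤ b*(4*M^2+1)*(k+1) - 8*x*M^2 := by
        nlinarith [mul_nonneg (sub_nonneg.2 hxb.le) (sq_nonneg M),
          mul_nonneg (sub_nonneg.2 hk) (mul_nonneg hb0.le (sq_nonneg M)),
          mul_nonneg (sub_nonneg.2 hk) hb0.le]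
      have e1 : 0 ≤ (k-1) * (b*L*(b*(4*M^2+1)*(k+1) - 8*x*M^2)) :=
        mul_nonneg (by linarith) (mul_nonneg (mul_nonneg hb0.le hL.le) f2)
      -- the k = 1 inequality
      have goal1 : 0 ≤ 4*x^2*M^3 - 8*b*x*L*M^2 + b^2*(4*M^2+1)*L := by
        -- log bound : L - M = log(b/x) ≤ b/x - 1
        have hs : L - M ≤ b/x - 1 := by
          have h2 := Real.log_le_sub_one_of_pos (show (0:ℝ) < b/x from div_pos hb0 hx0)
          rw [Real.log_div (ne_of_gt hb0) (ne_of_gt hx0)] at h2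
          have : Real.log b - Real.log x = L - M := by simp only [hLdef, hMdef]; ring
          linarith [this ▸ h2]
        have h3 : x * (b/x - 1) = b - x := by field_simp
        have hs' : x*L - x*M ≤ b - x := by
          nlinarith [mul_le_mul_of_nonneg_left hs hx0.le]
        rcases le_or_gt (8*x*M^2) (b*(4*M^2+1)) with hd | hd
        · nlinarith [mul_nonneg (mul_nonneg hb0.le hL.le) (sub_nonneg.2 hd),
            mul_nonneg (mul_nonneg (sq_nonneg x) hM.le) (sq_nonneg M)]
        · -- x·P ≥ Q = x·M·(2M(b-x)-b)² + 4M²(b-x)²·b + (b-x)·b² ≥ 0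
          have hA : 0 ≤ (8*x*M^2 - b*(4*M^2+1)) * ((x*M + b - x) - x*L) :=
            mul_nonneg (by linarith) (by linarith)
          nlinarith [mul_nonneg hb0.le hA,
            mul_nonneg (mul_nonneg hx0.le hM.le) (sq_nonneg (2*M*(b-x) - b)),
            mul_nonneg (mul_nonneg (sq_nonneg (2*M)) (sq_nonneg (b-x))) hb0.le,
            mul_nonneg (sub_nonneg.2 hxb.le) (sq_nonneg b), hx0]
      nlinarith [e1, goal1]
  have hpos : (0:ℝ) < 4*L*M^3 := by positivity
  have h1 : x^2/L - 2*(b/M)*x*k + (b^2/M)*(1+1/(2*M)^2)*k^2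
      = (4*x^2*M^3 - 8*b*x*k*L*M^2 + b^2*(4*M^2+1)*L*k^2)/(4*L*M^3) := by
    field_simp
    ring
  have h2 : 0 ≤ x^2/L - 2*(b/M)*x*k + (b^2/M)*(1+1/(2*M)^2)*k^2 := by
    rw [h1]; exact div_nonneg key hpos.le
  linarith
end

section
/- Let c : ℕ → ℝ≥0 satisfy Σₙ cₙ = 1 and Σₙ cₙ·n = k, and let p ∈ ℕ with p ≥ 4k ≥ 4. Then Σ_{n < p} cₙ·n(n-1) + (1/2)·Σ_{n ≥ p} cₙ·n·(p-1) ≥ k(k-1). -/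
/-!
Let `t = Σ_{n<p} cₙ n ≤ k`. Since the weights `cₙ`, `n < p`, have total mass at most one,
Cauchy–Schwarz gives `Σ_{n<p} cₙ n² ≥ t²`, so the first sum is at least `t² - t`; the tail
`Σ_{n≥p} cₙ n` equals `k - t`. The resulting lower bound `t² - t + (p - 1)(k - t)/2` exceeds
`k(k - 1)` by `(k - t)((p - 1)/2 + 1 - k - t) ≥ 0`, because `p ≥ 4k` and `t ≤ k`.
-/

open Finset

theorem tsum_ite_le_eq_tsum_sub_sum {f : ℕ → ℝ} (hf : Summable f) (p : ℕ) :
    ∑' n, (if p ≤ n then f n else 0) = ∑' n, f n - ∑ n ∈ range p, f n := by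
  have hfin : ∀ n ∉ range p, (if n < p then f n else 0) = 0 := by
    intro n hn
    exact if_neg (by simpa using hn)
  calc ∑' n, (if p ≤ n then f n else 0)
      = ∑' n, (f n - if n < p then f n else 0) := by
        congr with n
        rcases le_or_gt p n with h | h
        · simp [h, not_lt_of_ge h]
        · simp [h, not_le_of_gt h]
    _ = ∑' n, f n - ∑ n ∈ range p, (if n < p then f n else 0) := by
        rw [hf.tsum_sub (summable_of_ne_finset_zero hfin), tsum_eq_sum hfin]
    _ = ∑' n, f n - ∑ n ∈ range p, f n := by
        rw [sum_congr rfl fun n hn => if_pos (mem_range.1 hn)]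

theorem sq_sum_mul_le_sum_mul_sq {ι : Type*} (s : Finset ι) {w x : ι → ℝ}
    (hw : ∀ i ∈ s, 0 ≤ w i) (hw1 : ∑ i ∈ s, w i ≤ 1) :
    (∑ i ∈ s, w i * x i) ^ 2 ≤ ∑ i ∈ s, w i * x i ^ 2 := by
  have hx : 0 ≤ ∑ i ∈ s, w i * x i ^ 2 :=
    sum_nonneg fun i hi => mul_nonneg (hw i hi) (sq_nonneg _)
  calc (∑ i ∈ s, w i * x i) ^ 2 ≤ (∑ i ∈ s, w i) * ∑ i ∈ s, w i * x i ^ 2 :=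
        sum_sq_le_sum_mul_sum_of_sq_le_mul s hw
          (fun i hi => mul_nonneg (hw i hi) (sq_nonneg _)) fun i _ => by
            rw [mul_pow, sq, mul_assoc]
    _ ≤ ∑ i ∈ s, w i * x i ^ 2 := mul_le_of_le_one_left hx hw1

theorem sq_sub_le_sum_mul_mul_sub_one {ι : Type*} (s : Finset ι) {w x : ι → ℝ}
    (hw : ∀ i ∈ s, 0 ≤ w i) (hw1 : ∑ i ∈ s, w i ≤ 1) :
    (∑ i ∈ s, w i * x i) ^ 2 - ∑ i ∈ s, w i * x i ≤ ∑ i ∈ s, w i * x i * (x i - 1) := by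
  have hsq := sq_sum_mul_le_sum_mul_sq s (x := x) hw hw1
  have hsplit : ∑ i ∈ s, w i * x i * (x i - 1) = ∑ i ∈ s, w i * x i ^ 2 - ∑ i ∈ s, w i * x i := by
    rw [← sum_sub_distrib]
    exact sum_congr rfl fun i _ => by ring
  linarith

theorem mul_sub_one_le_sq_sub_add_mul_sub {k t q : ℝ} (htk : t ≤ k) (hq : 4 * k ≤ q) :
    k * (k - 1) ≤ t ^ 2 - t + 1 / 2 * (q - 1) * (k - t) := by
  nlinarith [mul_nonneg (sub_nonneg.2 htk) (by linarith : 0 ≤ (q - 1) / 2 - t - k + 1)]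

theorem cell_distribution_bound_general (c : ℕ → ℝ) (hc : ∀ n, 0 ≤ c n)
    (hsum : Summable c) (h1 : ∑' n, c n = 1)
    (hsum2 : Summable fun n => c n * n) (k : ℝ) (hk : ∑' n, c n * n = k)
    (p : ℕ) (hp : 4 * k ≤ (p : ℝ)) :
    k * (k - 1) ≤ (∑ n ∈ Finset.range p, c n * n * ((n : ℝ) - 1)) +
      (1 / 2) * ((p : ℝ) - 1) * ∑' n, (if p ≤ n then c n * n else 0) := by
  set t := ∑ n ∈ range p, c n * n
  have hmass : ∑ n ∈ range p, c n ≤ 1 := h1 ▸ hsum.sum_le_tsum _ fun n _ => hc n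
  have htk : t ≤ k := hk ▸ hsum2.sum_le_tsum _ fun n _ => mul_nonneg (hc n) n.cast_nonneg
  have hhead : t ^ 2 - t ≤ ∑ n ∈ range p, c n * n * ((n : ℝ) - 1) :=
    sq_sub_le_sum_mul_mul_sub_one (range p) (fun n _ => hc n) hmass
  rw [tsum_ite_le_eq_tsum_sub_sum hsum2, hk]
  calc k * (k - 1) ≤ t ^ 2 - t + 1 / 2 * (p - 1) * (k - t) :=
        mul_sub_one_le_sq_sub_add_mul_sub htk hp
    _ ≤ _ := by gcongr

/-- Let `c : ℕ → ℝ≥0` with `Σ cₙ = 1` and `Σ cₙ n = k`, and let `p ∈ ℕ` with `p ≥ 4k ≥ 4`.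
Then `Σ_{n<p} cₙ n(n-1) + (1/2) Σ_{n≥p} cₙ n (p-1) ≥ k(k-1)`. -/
theorem cell_distribution_bound (c : ℕ → ℝ) (hc : ∀ n, 0 ≤ c n)
    (hsum : Summable c) (h1 : ∑' n, c n = 1)
    (hsum2 : Summable fun n => c n * n) (k : ℝ) (hk : ∑' n, c n * n = k)
    (hk1 : 1 ≤ k) (p : ℕ) (hp : 4 * k ≤ (p : ℝ)) :
    k * (k - 1) ≤ (∑ n ∈ Finset.range p, c n * n * ((n : ℝ) - 1)) +
      (1 / 2) * ((p : ℝ) - 1) * ∑' n, (if p ≤ n then c n * n else 0) :=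
  cell_distribution_bound_general c hc hsum h1 hsum2 k hk p hp
end

section
/- Let v : [0, ∞) → [0, ∞) with v(r) = 0 for r > R₀, and let u₀ solve the zero-energy scattering equation -2μu₀'' + v·u₀ = 0 with u₀(0) = 0 and u₀(r) = r - a for r > R₀. Then for every R ≥ R₀: ∫₀^R { μ[u₀'(r) - u₀(r)/r]² + (1/2)v(r)u₀(r)² } dr = μ·a·(R - a)/R. -/
/-! With `F r = u₀ r * (u₀' r - u₀ r / r)` one has `F' = (u₀' - u₀/r)² + u₀ u₀''`, and the
scattering equation turns `μ u₀ u₀''` into `(1/2) v u₀²`, so the integrand is `μ F'`.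
The integral is then the boundary term `μ F R`, which equals `μ a (R - a) / R` because
`u₀ R = R - a` and `u₀' R = 1`. At the left end `F` is continuous with `F 0 = 0`, since
`u₀ r / r → u₀' 0` as `r → 0`. Integrability of the singular-looking integrand comes for
free: for `μ > 0` and `v ≥ 0` it is a nonnegative derivative. -/

open Set Filter Topology intervalIntegral

theorem Set.EqOn.Ici_of_Ioi {α β : Type*} [TopologicalSpace α] [LinearOrder α]
    [OrderTopology α] [DenselyOrdered α] [NoMaxOrder α] [TopologicalSpace β] [T2Space β]
    {f g : α → β} {c : α}
    (h : EqOn f g (Ioi c)) (hf : Continuous f) (hg : Continuous g) : EqOn f g (Ici c) := by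
  simpa only [closure_Ioi] using h.closure hf hg

section

variable {u u' : ℝ → ℝ}

theorem hasDerivAt_mul_sub_div_self {x u'' : ℝ} (hx : x ≠ 0) (hu : HasDerivAt u (u' x) x)
    (hu' : HasDerivAt u' u'' x) :
    HasDerivAt (fun r => u r * (u' r - u r / r)) ((u' x - u x / x) ^ 2 + u x * u'') x :=
  (hu.fun_mul (hu'.fun_sub (hu.fun_div (hasDerivAt_id' x) hx))).congr_deriv (by field_simp; ring)

theorem continuousAt_zero_mul_sub_div_self (h0 : u 0 = 0) (hu : HasDerivAt u (u' 0) 0)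
    (hu' : ContinuousAt u' 0) : ContinuousAt (fun r => u r * (u' r - u r / r)) 0 := by
  rw [← continuousWithinAt_compl_self, ContinuousWithinAt, h0, zero_mul]
  have hquot : Tendsto (fun r => u r / r) (𝓝[≠] 0) (𝓝 (u' 0)) := by
    convert hasDerivAt_iff_tendsto_slope.mp hu using 1
    ext r
    simp [slope_def_field, h0]
  have hu0 : Tendsto u (𝓝[≠] 0) (𝓝 0) := by
    simpa [h0] using hu.continuousAt.tendsto.mono_left nhdsWithin_le_nhds
  simpa using hu0.mul ((hu'.tendsto.mono_left nhdsWithin_le_nhds).sub hquot)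

theorem continuous_mul_sub_div_self {u'' : ℝ → ℝ} (h0 : u 0 = 0)
    (hu : ∀ r, HasDerivAt u (u' r) r) (hu' : ∀ r, HasDerivAt u' (u'' r) r) :
    Continuous fun r => u r * (u' r - u r / r) := by
  refine continuous_iff_continuousAt.2 fun r => ?_
  rcases eq_or_ne r 0 with rfl | hr
  · exact continuousAt_zero_mul_sub_div_self h0 (hu 0) (hu' 0).continuousAt
  · exact (hasDerivAt_mul_sub_div_self hr (hu r) (hu' r)).continuousAt

theorem integral_sq_sub_div_add_mul_eq {u'' : ℝ → ℝ} {R : ℝ} (hR : 0 ≤ R) (h0 : u 0 = 0)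
    (hu : ∀ r, HasDerivAt u (u' r) r) (hu' : ∀ r, HasDerivAt u' (u'' r) r)
    (hnonneg : ∀ r ∈ Ioo 0 R, 0 ≤ (u' r - u r / r) ^ 2 + u r * u'' r) :
    ∫ r in (0 : ℝ)..R, ((u' r - u r / r) ^ 2 + u r * u'' r) = u R * (u' R - u R / R) := by
  have hcont := (continuous_mul_sub_div_self h0 hu hu').continuousOn (s := Icc 0 R)
  have hderiv : ∀ r ∈ Ioo 0 R, HasDerivAt (fun r => u r * (u' r - u r / r))
      ((u' r - u r / r) ^ 2 + u r * u'' r) r :=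
    fun r hr => hasDerivAt_mul_sub_div_self hr.1.ne' (hu r) (hu' r)
  have hint := (intervalIntegrable_iff_integrableOn_Ioc_of_le hR).2
    (integrableOn_deriv_of_nonneg hcont hderiv hnonneg)
  simp [integral_eq_sub_of_hasDerivAt_of_le hR hcont hderiv hint, h0]

end

theorem scattering_solution_integral_general (μ a R₀ R : ℝ) (hμ : 0 < μ) (hR₀ : 0 < R₀)
    (hR : R₀ ≤ R)
    (v u₀ u₀' u₀'' : ℝ → ℝ) (hvpos : ∀ r, 0 ≤ v r)
    (hu : ∀ r, HasDerivAt u₀ (u₀' r) r) (hu' : ∀ r, HasDerivAt u₀' (u₀'' r) r)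
    (heq : ∀ r, -2 * μ * u₀'' r + v r * u₀ r = 0)
    (h0 : u₀ 0 = 0) (hasym : ∀ r, R₀ < r → u₀ r = r - a) :
    ∫ r in (0:ℝ)..R, (μ * (u₀' r - u₀ r / r) ^ 2 + (1 / 2) * v r * u₀ r ^ 2) =
      μ * a * (R - a) / R := by
  have hRpos : 0 < R := hR₀.trans_le hR
  have hpot (r : ℝ) : (1 / 2) * v r * u₀ r ^ 2 = μ * (u₀ r * u₀'' r) := by
    linear_combination (1 / 2 * u₀ r) * heq r
  have hnonneg (r : ℝ) : 0 ≤ (u₀' r - u₀ r / r) ^ 2 + u₀ r * u₀'' r := by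
    have : 0 ≤ μ * (u₀ r * u₀'' r) := by
      rw [← hpot r]
      exact mul_nonneg (mul_nonneg one_half_pos.le (hvpos r)) (sq_nonneg _)
    exact add_nonneg (sq_nonneg _) (nonneg_of_mul_nonneg_right this hμ)
  have hu₀_cont : Continuous u₀ := continuous_iff_continuousAt.2 fun r => (hu r).continuousAt
  have hu₀'_cont : Continuous u₀' := continuous_iff_continuousAt.2 fun r => (hu' r).continuousAt
  have hu₀'_Ioi : EqOn u₀' 1 (Ioi R₀) := fun r hr =>
    (hu r).unique <| ((hasDerivAt_id r).sub_const a).congr_of_eventuallyEq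
      (eventuallyEq_of_mem (Ioi_mem_nhds hr) hasym)
  have hval : EqOn u₀ (fun r => r - a) (Ici R₀) := EqOn.Ici_of_Ioi hasym hu₀_cont (by fun_prop)
  have hslope : EqOn u₀' 1 (Ici R₀) := hu₀'_Ioi.Ici_of_Ioi hu₀'_cont continuous_const
  calc ∫ r in (0:ℝ)..R, (μ * (u₀' r - u₀ r / r) ^ 2 + (1 / 2) * v r * u₀ r ^ 2)
      = μ * ∫ r in (0:ℝ)..R, ((u₀' r - u₀ r / r) ^ 2 + u₀ r * u₀'' r) := by
        simp_rw [hpot, ← mul_add, integral_const_mul]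
    _ = μ * (u₀ R * (u₀' R - u₀ R / R)) := by
        rw [integral_sq_sub_div_add_mul_eq hRpos.le h0 hu hu' fun r _ => hnonneg r]
    _ = μ * a * (R - a) / R := by
        rw [hval hR, hslope hR, Pi.one_apply]
        field_simp
        ring

/-- For the zero-energy scattering solution `u₀` of `-2μu₀'' + v u₀ = 0`, `u₀(0) = 0`,
`u₀(r) = r - a` for `r > R₀` (where `v ≥ 0` vanishes beyond `R₀`), one has, for every
`R ≥ R₀`: `∫₀^R {μ[u₀' - u₀/r]² + (1/2) v u₀²} dr = μ a (R - a)/R`. -/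
theorem scattering_solution_integral (μ a R₀ R : ℝ) (hμ : 0 < μ) (hR₀ : 0 < R₀)
    (hR : R₀ ≤ R)
    (v u₀ u₀' u₀'' : ℝ → ℝ) (hv : Continuous v) (hvpos : ∀ r, 0 ≤ v r)
    (hvsupp : ∀ r, R₀ < r → v r = 0)
    (hu : ∀ r, HasDerivAt u₀ (u₀' r) r) (hu' : ∀ r, HasDerivAt u₀' (u₀'' r) r)
    (hu''c : Continuous u₀'')
    (heq : ∀ r, -2 * μ * u₀'' r + v r * u₀ r = 0)
    (h0 : u₀ 0 = 0) (hasym : ∀ r, R₀ < r → u₀ r = r - a) :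
    ∫ r in (0:ℝ)..R, (μ * (u₀' r - u₀ r / r) ^ 2 + (1 / 2) * v r * u₀ r ^ 2) =
      μ * a * (R - a) / R :=
  scattering_solution_integral_general μ a R₀ R hμ hR₀ hR v u₀ u₀' u₀'' hvpos hu hu' heq h0 hasym
end

section
/- (Radial Dyson lemma, 3D, delta case) Let v(r) ≥ 0 with v(r) = 0 for r > R₀, with scattering length a, and let μ > 0. For every R with R₀ ≤ R ≤ R₁ and every continuously differentiable function u : [0, R₁] → ℝ with u(0) = 0: ∫₀^{R₁} { μ[u'(r) - u(r)/r]² + (1/2)v(r)u(r)² } dr ≥ μ·a·u(R)²/R². -/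
/-!
With `w = u / r`, the integrand is `μ (u' - w)² + v u² / 2`. For any solution `ψ` of the
zero-energy equation `2 μ ψ'' = v ψ` with `ψ(0) = 0`, the flux
`Φ = μ (2 u ψ' - ψ ψ' - u² / r)` satisfies
`μ (u' - w)² + v u² / 2 - Φ' = μ (u' - ψ')² + v (u - ψ)² / 2 ≥ 0`,
so the integral over `[0, R]` is at least `Φ(R) - Φ(0) = Φ(R)`. Taking `ψ = t u₀` with
`t = u(R) / R`, so that `ψ(R) = u(R) (R - a) / R` and `ψ'(R) = u(R) / R`, gives
`Φ(R) = μ a u(R)² / R²`; the integrand is nonnegative on `[R, R₁]`.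
-/

open Set Filter Topology MeasureTheory intervalIntegral

lemma continuous_of_forall_hasDerivAt {f f' : ℝ → ℝ} (hf : ∀ r, HasDerivAt f (f' r) r) :
    Continuous f :=
  continuous_iff_continuousAt.2 fun r => (hf r).continuousAt

section RadialEnergy

variable {μ : ℝ} {v u u' ψ ψ' ψ'' : ℝ → ℝ}

lemma dslope_zero_eq_div (hu0 : u 0 = 0) {r : ℝ} (hr : r ≠ 0) : dslope u 0 r = u r / r := by
  rw [dslope_of_ne u hr, slope_def_field, hu0, sub_zero, sub_zero]

lemma continuous_dslope_of_hasDerivAt (hu : ∀ r, HasDerivAt u (u' r) r) (a : ℝ) :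
    Continuous (dslope u a) := by
  rw [← continuousOn_univ, continuousOn_dslope univ_mem, continuousOn_univ]
  exact ⟨continuous_of_forall_hasDerivAt hu, (hu a).differentiableAt⟩

lemma hasDerivAt_mul_dslope_sq (hu : ∀ r, HasDerivAt u (u' r) r) {r : ℝ} (hr : r ≠ 0) :
    HasDerivAt (fun s => s * dslope u 0 s ^ 2)
      (2 * u' r * dslope u 0 r - dslope u 0 r ^ 2) r := by
  have hquot : HasDerivAt (fun s => (u s - u 0) ^ 2 / s)
      ((2 * (u r - u 0) * u' r * r - (u r - u 0) ^ 2 * 1) / r ^ 2) r := by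
    have hsq := ((hu r).sub_const (u 0)).pow 2
    refine (hsq.div (hasDerivAt_id r) hr).congr_deriv ?_
    simp only [id, Pi.pow_apply, Nat.cast_ofNat]
    ring
  have hslope : ∀ s ≠ 0, dslope u 0 s = (u s - u 0) / s := fun s hs => by
    rw [dslope_of_ne u hs, slope_def_field, sub_zero]
  refine (hquot.congr_of_eventuallyEq ?_).congr_deriv ?_
  · filter_upwards [isOpen_ne.mem_nhds hr] with s hs
    rw [hslope s hs]
    field_simp
  · rw [hslope r hr]
    field_simp

/-- `u² / r` is written as `r (u / r)²`, which is continuous at `0` when `u` is differentiable. -/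
noncomputable def dysonFlux (μ : ℝ) (u ψ ψ' : ℝ → ℝ) (r : ℝ) : ℝ :=
  μ * (2 * u r * ψ' r - ψ r * ψ' r - r * dslope u 0 r ^ 2)

/-- `dslope u 0` is `u r / r` continuously extended to `0`. -/
noncomputable def radialEnergyDensity (μ : ℝ) (v u u' : ℝ → ℝ) (r : ℝ) : ℝ :=
  μ * (u' r - dslope u 0 r) ^ 2 + 1 / 2 * v r * u r ^ 2

/-- The derivative of `dysonFlux` after eliminating `ψ''` by the zero-energy equation. -/
noncomputable def dysonFluxDeriv (μ : ℝ) (v u u' ψ ψ' : ℝ → ℝ) (r : ℝ) : ℝ :=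
  2 * μ * u' r * ψ' r + v r * u r * ψ r - μ * ψ' r ^ 2 - v r * ψ r ^ 2 / 2
    - μ * (2 * u' r * dslope u 0 r - dslope u 0 r ^ 2)

lemma continuous_dysonFlux (hu : ∀ r, HasDerivAt u (u' r) r)
    (hψ : ∀ r, HasDerivAt ψ (ψ' r) r) (hψ' : Continuous ψ') :
    Continuous (dysonFlux μ u ψ ψ') := by
  have hu_c : Continuous u := continuous_of_forall_hasDerivAt hu
  have hψ_c : Continuous ψ := continuous_of_forall_hasDerivAt hψ
  have hw := continuous_dslope_of_hasDerivAt hu 0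
  unfold dysonFlux
  fun_prop

lemma continuous_radialEnergyDensity (hv : Continuous v) (hu : ∀ r, HasDerivAt u (u' r) r)
    (hu' : Continuous u') : Continuous (radialEnergyDensity μ v u u') := by
  have hu_c : Continuous u := continuous_of_forall_hasDerivAt hu
  have hw := continuous_dslope_of_hasDerivAt hu 0
  unfold radialEnergyDensity
  fun_prop

lemma hasDerivAt_dysonFlux (hu : ∀ r, HasDerivAt u (u' r) r)
    (hψ : ∀ r, HasDerivAt ψ (ψ' r) r) (hψ' : ∀ r, HasDerivAt ψ' (ψ'' r) r) {r : ℝ} (hr : r ≠ 0)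
    (heq : -2 * μ * ψ'' r + v r * ψ r = 0) :
    HasDerivAt (dysonFlux μ u ψ ψ') (dysonFluxDeriv μ v u u' ψ ψ' r) r := by
  have h := ((((hu r).const_mul 2).mul (hψ' r)).sub ((hψ r).mul (hψ' r))).sub
    (hasDerivAt_mul_dslope_sq hu hr) |>.const_mul μ
  refine h.congr_deriv ?_
  unfold dysonFluxDeriv
  linear_combination (ψ r - 2 * u r) / 2 * heq

/-- Completing the square: the difference is `μ (u' - ψ')² + v (u - ψ)² / 2`. -/
lemma dysonFluxDeriv_le_radialEnergyDensity (hμ : 0 ≤ μ) {r : ℝ} (hv : 0 ≤ v r) :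
    dysonFluxDeriv μ v u u' ψ ψ' r ≤ radialEnergyDensity μ v u u' r := by
  have hsq : radialEnergyDensity μ v u u' r - dysonFluxDeriv μ v u u' ψ ψ' r
      = μ * (u' r - ψ' r) ^ 2 + 1 / 2 * v r * (u r - ψ r) ^ 2 := by
    unfold radialEnergyDensity dysonFluxDeriv
    ring
  have : 0 ≤ μ * (u' r - ψ' r) ^ 2 + 1 / 2 * v r * (u r - ψ r) ^ 2 := by positivity
  linarith

lemma radialEnergyDensity_nonneg (hμ : 0 ≤ μ) {r : ℝ} (hv : 0 ≤ v r) :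
    0 ≤ radialEnergyDensity μ v u u' r := by
  unfold radialEnergyDensity
  positivity

theorem dysonFlux_le_integral_radialEnergyDensity (hμ : 0 ≤ μ) {R : ℝ} (hR : 0 ≤ R)
    (hv : Continuous v) (hvpos : ∀ r, 0 ≤ v r)
    (hu : ∀ r, HasDerivAt u (u' r) r) (hu' : Continuous u') (hu0 : u 0 = 0)
    (hψ : ∀ r, HasDerivAt ψ (ψ' r) r) (hψ' : ∀ r, HasDerivAt ψ' (ψ'' r) r)
    (heq : ∀ r, -2 * μ * ψ'' r + v r * ψ r = 0) (hψ0 : ψ 0 = 0) :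
    dysonFlux μ u ψ ψ' R ≤ ∫ r in (0 : ℝ)..R, radialEnergyDensity μ v u u' r := by
  have hflux0 : dysonFlux μ u ψ ψ' 0 = 0 := by simp [dysonFlux, hu0, hψ0]
  have h := sub_le_integral_of_hasDeriv_right_of_le hR
    (continuous_dysonFlux hu hψ (continuous_of_forall_hasDerivAt hψ')).continuousOn
    (fun r hr => (hasDerivAt_dysonFlux hu hψ hψ' hr.1.ne' (heq r)).hasDerivWithinAt)
    (continuous_radialEnergyDensity hv hu hu').integrableOn_Icc
    (fun r _ => dysonFluxDeriv_le_radialEnergyDensity hμ (hvpos r))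
  rwa [hflux0, sub_zero] at h

lemma integral_radialEnergyDensity (hu0 : u 0 = 0) (a b : ℝ) :
    ∫ r in a..b, radialEnergyDensity μ v u u' r
      = ∫ r in a..b, (μ * (u' r - u r / r) ^ 2 + 1 / 2 * v r * u r ^ 2) :=
  integral_congr_ae <| (Measure.ae_ne volume 0).mono fun r hr _ => by
    rw [radialEnergyDensity, dslope_zero_eq_div hu0 hr]

end RadialEnergy

section ScatteringSolution

variable {u₀ u₀' : ℝ → ℝ} {R₀ a : ℝ}

lemma scattering_solution_eq_of_le (hu₀ : ∀ r, HasDerivAt u₀ (u₀' r) r)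
    (hasym : ∀ r, R₀ < r → u₀ r = r - a) {R : ℝ} (hR : R₀ ≤ R) : u₀ R = R - a := by
  have hu₀_c : Continuous u₀ := continuous_of_forall_hasDerivAt hu₀
  have h : EqOn u₀ (· - a) (closure (Ioi R₀)) :=
    EqOn.closure (fun r hr => hasym r hr) hu₀_c (continuous_sub_right a)
  exact h (by rwa [closure_Ioi])

lemma scattering_solution_deriv_eq_of_le (hu₀ : ∀ r, HasDerivAt u₀ (u₀' r) r)
    (hu₀' : Continuous u₀') (hasym : ∀ r, R₀ < r → u₀ r = r - a) {R : ℝ} (hR : R₀ ≤ R) :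
    u₀' R = 1 := by
  have hone : EqOn u₀' (fun _ => 1) (Ioi R₀) := fun r hr =>
    (hu₀ r).unique <| ((hasDerivAt_id r).sub_const a).congr_of_eventuallyEq <|
      eventually_of_mem (Ioi_mem_nhds hr) hasym
  exact hone.closure hu₀' continuous_const (by rwa [closure_Ioi])

end ScatteringSolution

theorem dyson_radial_3d_general (μ a R₀ R R₁ : ℝ) (hμ : 0 < μ) (hR₀ : 0 < R₀)
    (hR : R₀ ≤ R) (hR1 : R ≤ R₁)
    (v : ℝ → ℝ) (hv : Continuous v) (hvpos : ∀ r, 0 ≤ v r)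
    (u₀ u₀' u₀'' : ℝ → ℝ)
    (hu₀ : ∀ r, HasDerivAt u₀ (u₀' r) r) (hu₀' : ∀ r, HasDerivAt u₀' (u₀'' r) r)
    (heq : ∀ r, -2 * μ * u₀'' r + v r * u₀ r = 0)
    (h00 : u₀ 0 = 0) (hasym : ∀ r, R₀ < r → u₀ r = r - a)
    (u u' : ℝ → ℝ) (hu : ∀ r, HasDerivAt u (u' r) r) (hu'c : Continuous u')
    (hu0 : u 0 = 0) :
    μ * a * u R ^ 2 / R ^ 2 ≤
      ∫ r in (0:ℝ)..R₁, (μ * (u' r - u r / r) ^ 2 + (1 / 2) * v r * u r ^ 2) := by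
  have hRpos : 0 < R := hR₀.trans_le hR
  set t := u R / R with ht
  have hψeq : ∀ r, -2 * μ * (t * u₀'' r) + v r * (t * u₀ r) = 0 := fun r => by
    linear_combination t * heq r
  rw [← integral_radialEnergyDensity hu0]
  calc μ * a * u R ^ 2 / R ^ 2 = dysonFlux μ u (t * u₀ ·) (t * u₀' ·) R := by
        rw [dysonFlux, dslope_zero_eq_div hu0 hRpos.ne', scattering_solution_eq_of_le hu₀ hasym hR,
          scattering_solution_deriv_eq_of_le hu₀ (continuous_of_forall_hasDerivAt hu₀') hasym hR,
          ht]
        field_simp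
        ring
    _ ≤ ∫ r in (0 : ℝ)..R, radialEnergyDensity μ v u u' r :=
        dysonFlux_le_integral_radialEnergyDensity hμ.le hRpos.le hv hvpos hu hu'c hu0
          (fun r => (hu₀ r).const_mul t) (fun r => (hu₀' r).const_mul t) hψeq (by simp [h00])
    _ ≤ ∫ r in (0 : ℝ)..R₁, radialEnergyDensity μ v u u' r :=
        integral_mono_interval le_rfl hRpos.le hR1
          (ae_of_all _ fun r => radialEnergyDensity_nonneg hμ.le (hvpos r))
          ((continuous_radialEnergyDensity hv hu hu'c).intervalIntegrable _ _)

/-- **Radial Dyson lemma, 3D, delta case**: let `v ≥ 0` vanish beyond `R₀` and have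
scattering length `a` (defined via the zero-energy scattering solution `u₀`). Then for every
`R` with `R₀ ≤ R ≤ R₁` and every `C¹` function `u` on `[0, R₁]` with `u(0) = 0`:
`∫₀^{R₁} {μ[u' - u/r]² + (1/2) v u²} dr ≥ μ a u(R)²/R²`. -/
theorem dyson_radial_3d (μ a R₀ R R₁ : ℝ) (hμ : 0 < μ) (hR₀ : 0 < R₀)
    (hR : R₀ ≤ R) (hR1 : R ≤ R₁)
    (v : ℝ → ℝ) (hv : Continuous v) (hvpos : ∀ r, 0 ≤ v r)
    (hvsupp : ∀ r, R₀ < r → v r = 0)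
    (u₀ u₀' u₀'' : ℝ → ℝ)
    (hu₀ : ∀ r, HasDerivAt u₀ (u₀' r) r) (hu₀' : ∀ r, HasDerivAt u₀' (u₀'' r) r)
    (heq : ∀ r, -2 * μ * u₀'' r + v r * u₀ r = 0)
    (h00 : u₀ 0 = 0) (hasym : ∀ r, R₀ < r → u₀ r = r - a)
    (u u' : ℝ → ℝ) (hu : ∀ r, HasDerivAt u (u' r) r) (hu'c : Continuous u')
    (hu0 : u 0 = 0) :
    μ * a * u R ^ 2 / R ^ 2 ≤
      ∫ r in (0:ℝ)..R₁, (μ * (u' r - u r / r) ^ 2 + (1 / 2) * v r * u r ^ 2) :=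
  dyson_radial_3d_general μ a R₀ R R₁ hμ hR₀ hR hR1 v hv hvpos u₀ u₀' u₀'' hu₀ hu₀' heq h00 hasym u
    u' hu hu'c hu0
end

section
/- (Dyson lemma, 3D) Let v(r) ≥ 0 have finite range R₀ and scattering length a. Let U(r) ≥ 0 satisfy ∫₀^∞ U(r)r² dr ≤ 1 and U(r) = 0 for r < R₀. Let B ⊂ ℝ³ be star-shaped with respect to the origin. Then for all differentiable ψ on B: ∫_B [ μ|∇ψ(x)|² + (1/2)v(|x|)|ψ(x)|² ] dx ≥ μ·a·∫_B U(|x|)|ψ(x)|² dx. -/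
/-!
Along a ray `r ↦ r • ω` put `f(r) = ψ(r • ω)` and `c = f(R)`. Since `-2μu₀'' + v u₀ = 0`, the
energy `∫₀^R μ h'² + ½ v h²` of `h = r f - c u₀` is nonnegative, and expanding it (the cross terms
integrate by parts against `u₀`, which equals `r - a` beyond `R₀`) gives
`∫₀^R (μ f'² + ½ v f²) r² dr ≥ μ a f(R)²` for `R > R₀`: Dyson's bound for `U = R⁻² δ(· - R)`.
By star-shapedness all radii below `R` of the ray stay in `B`, so averaging over `R` against
`U(R) R² dR`, a measure of mass at most one, handles general `U`; integrating over directions in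
polar coordinates gives the theorem.
-/

open MeasureTheory Set Metric
open scoped ENNReal

theorem ofReal_le_lintegral_ofReal_of_le_integral {α : Type*} [MeasurableSpace α] {μ : Measure α}
    {φ : α → ℝ} {c : ℝ} (hφm : AEStronglyMeasurable φ μ) (hφ : 0 ≤ᵐ[μ] φ)
    (h : Integrable φ μ → c ≤ ∫ x, φ x ∂μ) :
    ENNReal.ofReal c ≤ ∫⁻ x, ENNReal.ofReal (φ x) ∂μ := by
  by_cases hfin : ∫⁻ x, ENNReal.ofReal (φ x) ∂μ = ∞
  · exact hfin ▸ le_top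
  have hint : Integrable φ μ :=
    ⟨hφm, (hasFiniteIntegral_iff_ofReal hφ).2 (lt_top_iff_ne_top.2 hfin)⟩
  rw [← ofReal_integral_eq_lintegral_ofReal hint hφ]
  exact ENNReal.ofReal_le_ofReal (h hint)

theorem lintegral_mul_le_of_lintegral_le_one {α : Type*} [MeasurableSpace α] {μ : Measure α}
    {w g : α → ℝ≥0∞} {Q : ℝ≥0∞} (hw : AEMeasurable w μ) (hw1 : ∫⁻ x, w x ∂μ ≤ 1)
    (hg : ∀ᵐ x ∂μ, w x ≠ 0 → g x ≤ Q) : ∫⁻ x, w x * g x ∂μ ≤ Q :=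
  calc ∫⁻ x, w x * g x ∂μ ≤ ∫⁻ x, w x * Q ∂μ := by
        refine lintegral_mono_ae (hg.mono fun x hx => ?_)
        rcases eq_or_ne (w x) 0 with h0 | h0
        · simp [h0]
        · gcongr
          exact hx h0
    _ = (∫⁻ x, w x ∂μ) * Q := lintegral_mul_const'' Q hw
    _ ≤ 1 * Q := by gcongr
    _ = Q := one_mul Q

section Polar

variable {E : Type*} [NormedAddCommGroup E] [NormedSpace ℝ E] [MeasurableSpace E] [BorelSpace E]
  [FiniteDimensional ℝ E] [Nontrivial E] (μ : Measure E) [μ.IsAddHaarMeasure]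

theorem lintegral_eq_lintegral_toSphere_lintegral_Ioi {h : E → ℝ≥0∞} (hh : Measurable h) :
    ∫⁻ x, h x ∂μ = ∫⁻ ω, ∫⁻ r in Ioi (0 : ℝ),
      h (r • (ω : E)) * ENNReal.ofReal (r ^ (Module.finrank ℝ E - 1)) ∂volume ∂μ.toSphere := by
  have hG : Measurable fun p : sphere (0 : E) 1 × Ioi (0 : ℝ) => h (p.2.1 • (p.1 : E)) :=
    hh.comp ((measurable_subtype_coe.comp measurable_snd).smul
      (measurable_subtype_coe.comp measurable_fst))
  calc ∫⁻ x, h x ∂μ = ∫⁻ x : ({0}ᶜ : Set E), h x ∂μ.comap Subtype.val := by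
        rw [lintegral_subtype_comap (measurableSet_singleton 0).compl, restrict_compl_singleton]
    _ = ∫⁻ p : sphere (0 : E) 1 × Ioi (0 : ℝ), h (p.2.1 • (p.1 : E))
          ∂μ.toSphere.prod (Measure.volumeIoiPow (Module.finrank ℝ E - 1)) := by
        rw [← (μ.measurePreserving_homeomorphUnitSphereProd).lintegral_comp hG]
        refine lintegral_congr fun x => ?_
        simp [smul_inv_smul₀ (norm_ne_zero_iff.2 x.2)]
    _ = _ := by
        rw [lintegral_prod _ hG.aemeasurable]
        refine lintegral_congr fun ω => ?_
        rw [Measure.volumeIoiPow,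
          lintegral_withDensity_eq_lintegral_mul _ (by fun_prop) (by fun_prop),
          ← lintegral_subtype_comap measurableSet_Ioi]
        simp only [Pi.mul_apply, mul_comm]

theorem setLIntegral_eq_lintegral_toSphere_setLIntegral {h : E → ℝ≥0∞} (hh : Measurable h)
    {B : Set E} (hB : MeasurableSet B) :
    ∫⁻ x in B, h x ∂μ = ∫⁻ ω, ∫⁻ r in Ioi (0 : ℝ) ∩ (fun r : ℝ => r • (ω : E)) ⁻¹' B,
      h (r • (ω : E)) * ENNReal.ofReal (r ^ (Module.finrank ℝ E - 1)) ∂volume ∂μ.toSphere := by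
  rw [← lintegral_indicator hB, lintegral_eq_lintegral_toSphere_lintegral_Ioi μ (hh.indicator hB)]
  refine lintegral_congr fun ω => ?_
  have hray : MeasurableSet ((fun r : ℝ => r • (ω : E)) ⁻¹' B) := (measurable_id.smul_const _) hB
  rw [inter_comm, ← Measure.restrict_restrict hray, ← lintegral_indicator hray]
  refine lintegral_congr fun r => ?_
  by_cases hr : r • (ω : E) ∈ B <;> simp [hr]

end Polar

/-- `u` is `r ↦ r ψ₀(r)` for the zero-energy scattering solution `ψ₀ = 1 - a / |x|`. -/
structure IsZeroEnergyScattering (μ : ℝ) (v : ℝ → ℝ) (R₀ a : ℝ) (u u' u'' : ℝ → ℝ) : Prop where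
  hasDerivAt : ∀ r, HasDerivAt u (u' r) r
  hasDerivAt_deriv : ∀ r, HasDerivAt u' (u'' r) r
  ode : ∀ r, -2 * μ * u'' r + v r * u r = 0
  map_zero : u 0 = 0
  eq_sub_of_lt : ∀ r, R₀ < r → u r = r - a

namespace IsZeroEnergyScattering

variable {μ R₀ a : ℝ} {v u u' u'' : ℝ → ℝ}

theorem deriv_eq_one_of_lt (hs : IsZeroEnergyScattering μ v R₀ a u u' u'') {r : ℝ} (hr : R₀ < r) :
    u' r = 1 := by
  have hev : u =ᶠ[nhds r] fun s => s - a :=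
    (eventually_gt_nhds hr).mono fun s h => hs.eq_sub_of_lt s h
  exact (hs.hasDerivAt r).unique (((hasDerivAt_id r).sub_const a).congr_of_eventuallyEq hev)

theorem mul_sq_le_integral (hs : IsZeroEnergyScattering μ v R₀ a u u' u'') (hμ : 0 ≤ μ)
    (hv : ∀ r, 0 ≤ v r) {f f' : ℝ → ℝ} (hf : ∀ r, HasDerivAt f (f' r) r) {R : ℝ} (hR : 0 ≤ R)
    (hR₀ : R₀ < R)
    (hint : IntegrableOn (fun r => (μ * f' r ^ 2 + 1 / 2 * v r * f r ^ 2) * r ^ 2) (Icc 0 R)) :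
    μ * a * f R ^ 2 ≤ ∫ r in 0..R, (μ * f' r ^ 2 + 1 / 2 * v r * f r ^ 2) * r ^ 2 := by
  set c := f R
  -- With `h = r f - c u`, the integrand equals `F' + μ h'² + ½ v h²` (using `2 μ u'' = v u`),
  -- and `F R - F 0 = μ a c²`.
  set F : ℝ → ℝ := fun r => μ * (2 * c * r * f r * u' r - r * f r ^ 2 - c ^ 2 * u r * u' r)
  set F' : ℝ → ℝ := fun r => μ * (2 * c * (f r + r * f' r) * u' r + 2 * c * r * f r * u'' r
      - (f r ^ 2 + r * (2 * f r * f' r)) - c ^ 2 * (u' r * u' r + u r * u'' r))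
  have hF : ∀ r, HasDerivAt F (F' r) r := fun r => by
    have hu := hs.hasDerivAt r
    have hu' := hs.hasDerivAt_deriv r
    have hid := hasDerivAt_id r
    refine (((((hid.const_mul (2 * c)).mul (hf r)).mul hu').sub (hid.mul ((hf r).pow 2))).sub
      ((hu.const_mul (c ^ 2)).mul hu')).const_mul μ |>.congr_deriv ?_
    simp only [F', id, Pi.mul_apply, Pi.pow_apply]
    ring
  have hF'_le : ∀ r, F' r ≤ (μ * f' r ^ 2 + 1 / 2 * v r * f r ^ 2) * r ^ 2 := fun r => by
    have hgap : (μ * f' r ^ 2 + 1 / 2 * v r * f r ^ 2) * r ^ 2 - F' r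
        = μ * (f r + r * f' r - c * u' r) ^ 2 + 1 / 2 * v r * (r * f r - c * u r) ^ 2 := by
      linear_combination (1 / 2) * (2 * c * r * f r - c ^ 2 * u r) * hs.ode r
    linarith [mul_nonneg hμ (sq_nonneg (f r + r * f' r - c * u' r)),
      mul_nonneg (hv r) (sq_nonneg (r * f r - c * u r))]
  have hFR : F R - F 0 = μ * a * c ^ 2 := by
    simp only [F, hs.eq_sub_of_lt R hR₀, hs.deriv_eq_one_of_lt hR₀, hs.map_zero]
    ring
  calc μ * a * f R ^ 2 = F R - F 0 := hFR.symm
    _ ≤ _ := intervalIntegral.sub_le_integral_of_hasDeriv_right_of_le hR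
      (fun r _ => (hF r).continuousAt.continuousWithinAt)
      (fun r _ => (hF r).hasDerivWithinAt) hint (fun r _ => hF'_le r)

theorem ofReal_mul_sq_le_lintegral (hs : IsZeroEnergyScattering μ v R₀ a u u' u'') (hμ : 0 ≤ μ)
    (hv : ∀ r, 0 ≤ v r) (hvm : Measurable v) {f f' : ℝ → ℝ} (hf : ∀ r, HasDerivAt f (f' r) r)
    {R : ℝ} (hR : 0 ≤ R) (hR₀ : R₀ < R) :
    ENNReal.ofReal (μ * a * f R ^ 2) ≤ ∫⁻ r in Ioc 0 R,
      ENNReal.ofReal (μ * f' r ^ 2 + 1 / 2 * v r * f r ^ 2) * ENNReal.ofReal (r ^ 2) := by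
  have hf'm : Measurable f' := by
    rw [show f' = deriv f from funext fun r => (hf r).deriv.symm]
    exact measurable_deriv f
  have hfm : Measurable f :=
    (continuous_iff_continuousAt.2 fun r => (hf r).continuousAt).measurable
  have hnonneg : ∀ r, 0 ≤ μ * f' r ^ 2 + 1 / 2 * v r * f r ^ 2 := fun r => by
    have := hv r; positivity
  simp_rw [← ENNReal.ofReal_mul (hnonneg _)]
  refine ofReal_le_lintegral_ofReal_of_le_integral (by fun_prop)
    (ae_of_all _ fun r => mul_nonneg (hnonneg r) (sq_nonneg r)) fun hint => ?_
  rw [← intervalIntegral.integral_of_le hR]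
  exact hs.mul_sq_le_integral hμ hv hf hR hR₀
    ((integrableOn_Icc_iff_integrableOn_Ioc (μ := volume)).2 hint)

theorem ofReal_mul_setLIntegral_le (hs : IsZeroEnergyScattering μ v R₀ a u u' u'')
    (hμ : 0 ≤ μ) (hv : ∀ r, 0 ≤ v r) (hvm : Measurable v) {U : ℝ → ℝ} (hU : ∀ r, 0 ≤ U r)
    (hUm : Measurable U) (hUsupp : ∀ r, r < R₀ → U r = 0)
    (hU1 : ∫⁻ r in Ioi 0, ENNReal.ofReal (U r * r ^ 2) ≤ 1)
    {f f' : ℝ → ℝ} (hf : ∀ r, HasDerivAt f (f' r) r) {I : Set ℝ} (hI : MeasurableSet I)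
    (hI0 : I ⊆ Ioi 0) (hIdown : ∀ R ∈ I, Ioc 0 R ⊆ I) :
    ENNReal.ofReal (μ * a) * ∫⁻ r in I, ENNReal.ofReal (U r * f r ^ 2) * ENNReal.ofReal (r ^ 2)
      ≤ ∫⁻ r in I, ENNReal.ofReal (μ * f' r ^ 2 + 1 / 2 * v r * f r ^ 2) *
        ENNReal.ofReal (r ^ 2) := by
  rw [← lintegral_const_mul' _ _ ENNReal.ofReal_ne_top]
  have hweight : ∀ r, ENNReal.ofReal (μ * a) *
      (ENNReal.ofReal (U r * f r ^ 2) * ENNReal.ofReal (r ^ 2))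
        = ENNReal.ofReal (U r * r ^ 2) * ENNReal.ofReal (μ * a * f r ^ 2) := fun r => by
    have := hU r
    rw [← ENNReal.ofReal_mul (by positivity), ← ENNReal.ofReal_mul' (by positivity),
      ← ENNReal.ofReal_mul (by positivity)]
    congr 1
    ring
  simp_rw [hweight]
  refine lintegral_mul_le_of_lintegral_le_one (by fun_prop)
    ((lintegral_mono_set hI0).trans hU1) ?_
  filter_upwards [ae_restrict_mem hI, ae_restrict_of_ae (Measure.ae_ne volume R₀)]
    with R hRI hRR₀ hUR
  have hR₀R : R₀ < R := lt_of_le_of_ne (not_lt.1 fun h => hUR (by simp [hUsupp R h])) hRR₀.symm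
  exact (hs.ofReal_mul_sq_le_lintegral hμ hv hvm hf (hI0 hRI).le hR₀R).trans
    (lintegral_mono_set (hIdown R hRI))

variable {E : Type*} [NormedAddCommGroup E] [NormedSpace ℝ E] [MeasurableSpace E] [BorelSpace E]

theorem ofReal_mul_lintegral_ray_le (hs : IsZeroEnergyScattering μ v R₀ a u u' u'')
    (hμ : 0 ≤ μ) (hv : ∀ r, 0 ≤ v r) (hvm : Measurable v) {U : ℝ → ℝ} (hU : ∀ r, 0 ≤ U r)
    (hUm : Measurable U) (hUsupp : ∀ r, r < R₀ → U r = 0)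
    (hU1 : ∫⁻ r in Ioi 0, ENNReal.ofReal (U r * r ^ 2) ≤ 1)
    {ψ : E → ℝ} (hψ : Differentiable ℝ ψ) {B : Set E} (hB : MeasurableSet B)
    (hstar : StarConvex ℝ 0 B) {ω : E} (hω : ‖ω‖ = 1) :
    ENNReal.ofReal (μ * a) * ∫⁻ r in Ioi 0 ∩ (fun r : ℝ => r • ω) ⁻¹' B,
        ENNReal.ofReal (U ‖r • ω‖ * ψ (r • ω) ^ 2) * ENNReal.ofReal (r ^ 2)
      ≤ ∫⁻ r in Ioi 0 ∩ (fun r : ℝ => r • ω) ⁻¹' B,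
        ENNReal.ofReal (μ * ‖fderiv ℝ ψ (r • ω)‖ ^ 2 + 1 / 2 * v ‖r • ω‖ * ψ (r • ω) ^ 2) *
          ENNReal.ofReal (r ^ 2) := by
  set I := Ioi 0 ∩ (fun r : ℝ => r • ω) ⁻¹' B
  have hI : MeasurableSet I :=
    measurableSet_Ioi.inter ((continuous_id.smul continuous_const).measurable hB)
  have hIdown : ∀ R ∈ I, Ioc 0 R ⊆ I := by
    rintro R ⟨hR : (0 : ℝ) < R, hRB⟩ r ⟨hr, hrR⟩
    refine ⟨hr, ?_⟩
    have := starConvex_zero_iff.1 hstar hRB (div_nonneg hr.le hR.le) ((div_le_one hR).2 hrR)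
    simpa [smul_smul, div_mul_cancel₀ _ hR.ne'] using this
  have hnorm : ∀ r ∈ I, ‖r • ω‖ = r := fun r hr => by
    rw [norm_smul, hω, mul_one, Real.norm_of_nonneg (le_of_lt hr.1)]
  have hray : ∀ r, HasDerivAt (fun r => ψ (r • ω)) (fderiv ℝ ψ (r • ω) ω) r := fun r =>
    (hψ _).hasFDerivAt.comp_hasDerivAt r
      ((hasDerivAt_id r).smul_const ω |>.congr_deriv (one_smul _ _))
  calc ENNReal.ofReal (μ * a) * ∫⁻ r in I,
        ENNReal.ofReal (U ‖r • ω‖ * ψ (r • ω) ^ 2) * ENNReal.ofReal (r ^ 2)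
      = ENNReal.ofReal (μ * a) * ∫⁻ r in I,
        ENNReal.ofReal (U r * ψ (r • ω) ^ 2) * ENNReal.ofReal (r ^ 2) := by
        rw [setLIntegral_congr_fun hI fun r hr => by rw [hnorm r hr]]
    _ ≤ ∫⁻ r in I, ENNReal.ofReal
          (μ * fderiv ℝ ψ (r • ω) ω ^ 2 + 1 / 2 * v r * ψ (r • ω) ^ 2) * ENNReal.ofReal (r ^ 2) :=
        hs.ofReal_mul_setLIntegral_le hμ hv hvm hU hUm hUsupp hU1 hray hI inter_subset_left hIdown
    _ ≤ _ := by
        refine setLIntegral_mono' hI fun r hr => ?_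
        have hdir : |fderiv ℝ ψ (r • ω) ω| ≤ ‖fderiv ℝ ψ (r • ω)‖ := by
          simpa [hω] using (fderiv ℝ ψ (r • ω)).le_opNorm ω
        rw [hnorm r hr]
        gcongr ENNReal.ofReal (μ * ?_ + _) * _
        exact sq_le_sq.2 (hdir.trans (le_abs_self _))

end IsZeroEnergyScattering

theorem dyson_lemma_3d_general (μ a R₀ : ℝ) (hμ : 0 < μ)
    (v : ℝ → ℝ) (hvm : Measurable v) (hvpos : ∀ r, 0 ≤ v r)
    (u₀ u₀' u₀'' : ℝ → ℝ)
    (hu₀ : ∀ r, HasDerivAt u₀ (u₀' r) r) (hu₀' : ∀ r, HasDerivAt u₀' (u₀'' r) r)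
    (heq : ∀ r, -2 * μ * u₀'' r + v r * u₀ r = 0)
    (h00 : u₀ 0 = 0) (hasym : ∀ r, R₀ < r → u₀ r = r - a)
    (U : ℝ → ℝ) (hUm : Measurable U) (hUpos : ∀ r, 0 ≤ U r)
    (hUsupp : ∀ r, r < R₀ → U r = 0)
    (hUi : IntegrableOn (fun r => U r * r ^ 2) (Set.Ioi (0:ℝ)))
    (hUint : ∫ r in Set.Ioi (0:ℝ), U r * r ^ 2 ≤ 1)
    (B : Set (EuclideanSpace ℝ (Fin 3))) (hBm : MeasurableSet B)
    (hstar : ∀ x ∈ B, ∀ t : ℝ, t ∈ Set.Icc (0:ℝ) 1 → t • x ∈ B)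
    (ψ : EuclideanSpace ℝ (Fin 3) → ℝ) (hψ : Differentiable ℝ ψ) :
    ENNReal.ofReal (μ * a) * ∫⁻ x in B, ENNReal.ofReal (U ‖x‖ * ψ x ^ 2) ≤
      ∫⁻ x in B, ENNReal.ofReal (μ * ‖fderiv ℝ ψ x‖ ^ 2 + (1 / 2) * v ‖x‖ * ψ x ^ 2) := by
  have hs : IsZeroEnergyScattering μ v R₀ a u₀ u₀' u₀'' := ⟨hu₀, hu₀', heq, h00, hasym⟩
  have hU1 : ∫⁻ r in Ioi 0, ENNReal.ofReal (U r * r ^ 2) ≤ 1 := by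
    rw [← ofReal_integral_eq_lintegral_ofReal hUi
      (ae_of_all _ fun r => mul_nonneg (hUpos r) (sq_nonneg r))]
    exact ENNReal.ofReal_le_one.2 hUint
  have hψm : Measurable ψ := hψ.continuous.measurable
  have hDψm := measurable_fderiv ℝ ψ
  rw [setLIntegral_eq_lintegral_toSphere_setLIntegral volume (by fun_prop) hBm,
    setLIntegral_eq_lintegral_toSphere_setLIntegral volume (by fun_prop) hBm,
    finrank_euclideanSpace_fin, ← lintegral_const_mul' _ _ ENNReal.ofReal_ne_top]
  exact lintegral_mono fun ω => hs.ofReal_mul_lintegral_ray_le hμ.le hvpos hvm hUpos hUm hUsupp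
    hU1 hψ hBm (starConvex_zero_iff.2 fun x hx t ht0 ht1 => hstar x hx t ⟨ht0, ht1⟩)
    (norm_eq_of_mem_sphere ω)

/-- **Dyson's lemma, 3D**: let `v ≥ 0` have finite range `R₀` and scattering length `a`
(defined via the zero-energy scattering solution `u₀`). Let `U ≥ 0` satisfy
`∫₀^∞ U(r) r² dr ≤ 1` and `U(r) = 0` for `r < R₀`, and let `B ⊂ ℝ³` be star-shaped with
respect to the origin. Then for all differentiable `ψ` on `B`:
`∫_B [μ|∇ψ|² + (1/2)v(|x|)|ψ|²] dx ≥ μ a ∫_B U(|x|)|ψ|² dx`. -/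
theorem dyson_lemma_3d (μ a R₀ : ℝ) (hμ : 0 < μ) (hR₀ : 0 < R₀)
    (v : ℝ → ℝ) (hvm : Measurable v) (hvpos : ∀ r, 0 ≤ v r)
    (hvsupp : ∀ r, R₀ < r → v r = 0)
    (u₀ u₀' u₀'' : ℝ → ℝ)
    (hu₀ : ∀ r, HasDerivAt u₀ (u₀' r) r) (hu₀' : ∀ r, HasDerivAt u₀' (u₀'' r) r)
    (heq : ∀ r, -2 * μ * u₀'' r + v r * u₀ r = 0)
    (h00 : u₀ 0 = 0) (hasym : ∀ r, R₀ < r → u₀ r = r - a)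
    (U : ℝ → ℝ) (hUm : Measurable U) (hUpos : ∀ r, 0 ≤ U r)
    (hUsupp : ∀ r, r < R₀ → U r = 0)
    (hUi : IntegrableOn (fun r => U r * r ^ 2) (Set.Ioi (0:ℝ)))
    (hUint : ∫ r in Set.Ioi (0:ℝ), U r * r ^ 2 ≤ 1)
    (B : Set (EuclideanSpace ℝ (Fin 3))) (hBm : MeasurableSet B)
    (hstar : ∀ x ∈ B, ∀ t : ℝ, t ∈ Set.Icc (0:ℝ) 1 → t • x ∈ B)
    (ψ : EuclideanSpace ℝ (Fin 3) → ℝ) (hψ : Differentiable ℝ ψ) :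
    ENNReal.ofReal (μ * a) * ∫⁻ x in B, ENNReal.ofReal (U ‖x‖ * ψ x ^ 2) ≤
      ∫⁻ x in B, ENNReal.ofReal (μ * ‖fderiv ℝ ψ x‖ ^ 2 + (1 / 2) * v ‖x‖ * ψ x ^ 2) :=
  dyson_lemma_3d_general μ a R₀ hμ v hvm hvpos u₀ u₀' u₀'' hu₀ hu₀' heq h00 hasym U hUm hUpos hUsupp
    hUi hUint B hBm hstar ψ hψ
end

section
/- The improper integral ∫₀^∞ (1 + x⁴ - x²·√(2 + x⁴)) dx converges and equals 2^(3/4)·√π·Γ(3/4)/(5·Γ(5/4)). -/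
/-!
Rationalizing gives `h(x) = 1 + x⁴ - x²√(2 + x⁴) = 1 / (1 + x⁴ + x²√(2 + x⁴))`, so `h` decreases
strictly from `h(0) = 1` to `0` on `[0, ∞)`. Its inverse is explicit: writing `x² = √2 sinh θ` one
finds `h = e^{-2θ}`, whence `h⁻¹(u) = √((1 - u)/√(2u)) = 2^{-1/4} u^{-1/4} (1 - u)^{1/2}`.
By the layer cake formula `∫₀^∞ h = ∫₀¹ h⁻¹ = 2^{-1/4} B(3/4, 3/2)`, and
`B(3/4, 3/2) = Γ(3/4) Γ(3/2) / Γ(9/4) = 2√π Γ(3/4) / (5 Γ(5/4))`.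
-/

open MeasureTheory Set Real

theorem lintegral_Ioi_eq_lintegral_Ioi_of_lt_iff {f φ : ℝ → ℝ}
    (hf_meas : AEMeasurable f (volume.restrict (Ioi 0)))
    (hf_nonneg : ∀ x ∈ Ioi (0 : ℝ), 0 ≤ f x)
    (hφ : ∀ t > 0, ∀ x > 0, t < f x ↔ x < φ t) :
    ∫⁻ x in Ioi 0, ENNReal.ofReal (f x) = ∫⁻ t in Ioi 0, ENNReal.ofReal (φ t) := by
  rw [lintegral_eq_lintegral_meas_lt _ (ae_restrict_of_forall_mem measurableSet_Ioi hf_nonneg)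
    hf_meas]
  refine setLIntegral_congr_fun measurableSet_Ioi fun t ht => ?_
  have hlevel : {x | t < f x} ∩ Ioi 0 = Ioo 0 (φ t) := by
    ext x
    exact ⟨fun ⟨htx, hx⟩ => ⟨hx, (hφ t ht x hx).1 htx⟩,
      fun ⟨hx, hxφ⟩ => ⟨(hφ t ht x hx).2 hxφ, hx⟩⟩
  rw [Measure.restrict_apply' measurableSet_Ioi, hlevel, volume_Ioo, sub_zero]

theorem lintegral_rpow_mul_one_sub_rpow {α β : ℝ} (hα : 0 < α) (hβ : 0 < β) :
    ∫⁻ x in Ioo 0 1, ENNReal.ofReal (x ^ (α - 1) * (1 - x) ^ (β - 1)) =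
      ENNReal.ofReal (ProbabilityTheory.beta α β) := by
  have hB := ProbabilityTheory.beta_pos hα hβ
  have h := ProbabilityTheory.lintegral_betaPDF_eq_one hα hβ
  rw [ProbabilityTheory.lintegral_betaPDF] at h
  simp_rw [mul_assoc, ENNReal.ofReal_mul (one_div_pos.2 hB).le] at h
  rw [lintegral_const_mul' _ _ ENNReal.ofReal_ne_top,
    ← ENNReal.eq_div_iff (by simpa using hB) ENNReal.ofReal_ne_top] at h
  rw [h, ← ENNReal.ofReal_one, ← ENNReal.ofReal_div_of_pos (by positivity)]
  simp

theorem integrable_and_integral_eq_of_lintegral_eq {α : Type*} [MeasurableSpace α]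
    {μ : Measure α} {f : α → ℝ} (hfm : AEStronglyMeasurable f μ) (hf : 0 ≤ᵐ[μ] f) {c : ℝ}
    (hc : 0 ≤ c) (h : ∫⁻ x, ENNReal.ofReal (f x) ∂μ = ENNReal.ofReal c) :
    Integrable f μ ∧ ∫ x, f x ∂μ = c :=
  ⟨(lintegral_ofReal_ne_top_iff_integrable hfm hf).1 (h ▸ ENNReal.ofReal_ne_top),
    by rw [integral_eq_lintegral_of_nonneg_ae hf hfm, h, ENNReal.toReal_ofReal hc]⟩

theorem beta_three_fourths_three_halves :
    ProbabilityTheory.beta (3 / 4) (3 / 2) = 2 * √π * Gamma (3 / 4) / (5 * Gamma (5 / 4)) := by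
  have hΓ32 : Gamma (3 / 2) = √π / 2 := by
    rw [show (3 / 2 : ℝ) = 1 / 2 + 1 by norm_num, Gamma_add_one (by norm_num), Gamma_one_half_eq]
    ring
  have hΓ94 : Gamma (3 / 4 + 3 / 2) = 5 / 4 * Gamma (5 / 4) := by
    rw [show (3 / 4 + 3 / 2 : ℝ) = 5 / 4 + 1 by norm_num, Gamma_add_one (by norm_num)]
  have hΓ54 : 0 < Gamma (5 / 4) := Gamma_pos_of_pos (by norm_num)
  rw [ProbabilityTheory.beta, hΓ32, hΓ94]
  field_simp
  ring

noncomputable def foldyIntegrand (x : ℝ) : ℝ := 1 + x ^ 4 - x ^ 2 * √(2 + x ^ 4)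

/-- For `t ≥ 1` the radicand is nonpositive, and the junk value `0` of `√` makes the superlevel
sets `{x > 0 | t < foldyIntegrand x} = Ioo 0 (foldyIntegrandInv t)` come out right for all `t > 0`. -/
noncomputable def foldyIntegrandInv (t : ℝ) : ℝ := √((1 - t) / √(2 * t))

theorem foldyIntegrand_eq_inv (x : ℝ) :
    foldyIntegrand x = (1 + x ^ 4 + x ^ 2 * √(2 + x ^ 4))⁻¹ := by
  have hs : √(2 + x ^ 4) ^ 2 = 2 + x ^ 4 := sq_sqrt (by positivity)
  refine eq_inv_of_mul_eq_one_left ?_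
  rw [foldyIntegrand]
  linear_combination (-x ^ 4) * hs

theorem foldyIntegrand_pos (x : ℝ) : 0 < foldyIntegrand x := by
  rw [foldyIntegrand_eq_inv]
  positivity

theorem continuous_foldyIntegrand : Continuous foldyIntegrand := by
  unfold foldyIntegrand
  fun_prop

theorem strictAntiOn_foldyIntegrand : StrictAntiOn foldyIntegrand (Ici 0) := by
  intro a (ha : 0 ≤ a) b _ hab
  simp only [foldyIntegrand_eq_inv]
  gcongr

theorem foldyIntegrand_lt_one {x : ℝ} (hx : 0 < x) : foldyIntegrand x < 1 := by
  simpa [foldyIntegrand] using strictAntiOn_foldyIntegrand self_mem_Ici hx.le hx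

theorem foldyIntegrand_foldyIntegrandInv {t : ℝ} (ht₀ : 0 < t) (ht₁ : t < 1) :
    foldyIntegrand (foldyIntegrandInv t) = t := by
  set r := √(2 * t)
  have hr : 0 < r := by positivity
  have hr2 : r ^ 2 = 2 * t := sq_sqrt (by positivity)
  have hsq : foldyIntegrandInv t ^ 2 = (1 - t) / r := sq_sqrt (div_nonneg (by linarith) hr.le)
  have hpow4 : foldyIntegrandInv t ^ 4 = ((1 - t) / r) ^ 2 := by rw [← hsq]; ring
  have hroot : √(2 + foldyIntegrandInv t ^ 4) = (1 + t) / r := by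
    rw [sqrt_eq_iff_eq_sq (by positivity) (by positivity), hpow4]
    field_simp
    linear_combination 2 * hr2
  rw [foldyIntegrand, hroot, hpow4, hsq]
  field_simp
  linear_combination (1 - t) * hr2

theorem foldyIntegrandInv_of_one_le {t : ℝ} (ht : 1 ≤ t) : foldyIntegrandInv t = 0 :=
  sqrt_eq_zero'.2 (div_nonpos_of_nonpos_of_nonneg (by linarith) (sqrt_nonneg _))

theorem lt_foldyIntegrand_iff {t x : ℝ} (ht : 0 < t) (hx : 0 < x) :
    t < foldyIntegrand x ↔ x < foldyIntegrandInv t := by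
  rcases lt_or_ge t 1 with ht₁ | ht₁
  · conv_lhs => rw [← foldyIntegrand_foldyIntegrandInv ht ht₁]
    exact strictAntiOn_foldyIntegrand.lt_iff_gt (sqrt_nonneg _) hx.le
  · rw [foldyIntegrandInv_of_one_le ht₁]
    exact iff_of_false (by linarith [foldyIntegrand_lt_one hx]) hx.not_gt

theorem foldyIntegrandInv_eq_rpow {t : ℝ} (ht₀ : 0 < t) (ht₁ : t < 1) :
    foldyIntegrandInv t =
      2 ^ (-(1 / 4 : ℝ)) * (t ^ ((3 / 4 : ℝ) - 1) * (1 - t) ^ ((3 / 2 : ℝ) - 1)) := by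
  have h1 : 0 < 1 - t := by linarith
  rw [foldyIntegrandInv, sqrt_eq_rpow, sqrt_eq_rpow, div_rpow h1.le (by positivity),
    mul_rpow (by norm_num) ht₀.le, mul_rpow (by positivity) (by positivity),
    ← rpow_mul (by norm_num), ← rpow_mul ht₀.le, div_eq_mul_inv, mul_inv,
    ← rpow_neg (by positivity), ← rpow_neg (by positivity)]
  norm_num
  ring

theorem lintegral_foldyIntegrand :
    ∫⁻ x in Ioi 0, ENNReal.ofReal (foldyIntegrand x) =
      ENNReal.ofReal (2 ^ (3 / 4 : ℝ) * √π * Gamma (3 / 4) / (5 * Gamma (5 / 4))) := by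
  rw [lintegral_Ioi_eq_lintegral_Ioi_of_lt_iff continuous_foldyIntegrand.aemeasurable
      (fun x _ => (foldyIntegrand_pos x).le) fun t ht x hx => lt_foldyIntegrand_iff ht hx,
    ← Ioo_union_Ici_eq_Ioi zero_lt_one, lintegral_union measurableSet_Ici
      ((Iio_disjoint_Ici le_rfl).mono_left Ioo_subset_Iio_self),
    setLIntegral_congr_fun measurableSet_Ici fun t ht => by
      rw [foldyIntegrandInv_of_one_le ht, ENNReal.ofReal_zero],
    lintegral_zero, add_zero,
    setLIntegral_congr_fun measurableSet_Ioo fun t ht => by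
      rw [foldyIntegrandInv_eq_rpow ht.1 ht.2, ENNReal.ofReal_mul (by positivity)],
    lintegral_const_mul' _ _ ENNReal.ofReal_ne_top,
    lintegral_rpow_mul_one_sub_rpow (by norm_num) (by norm_num),
    ← ENNReal.ofReal_mul (by positivity), beta_three_fourths_three_halves,
    show (3 / 4 : ℝ) = -(1 / 4) + 1 by norm_num, rpow_add_one two_ne_zero]
  ring_nf

/-- The improper integral `∫₀^∞ (1 + x⁴ - x²√(2 + x⁴)) dx` converges and equals
`2^{3/4} √π Γ(3/4)/(5 Γ(5/4))`. -/
theorem foldy_integral :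
    IntegrableOn (fun x : ℝ => 1 + x ^ 4 - x ^ 2 * Real.sqrt (2 + x ^ 4))
        (Set.Ioi (0:ℝ)) volume ∧
      ∫ x in Set.Ioi (0:ℝ), (1 + x ^ 4 - x ^ 2 * Real.sqrt (2 + x ^ 4)) =
        (2:ℝ) ^ ((3:ℝ) / 4) * Real.sqrt Real.pi * Real.Gamma (3 / 4) /
          (5 * Real.Gamma (5 / 4)) :=
  integrable_and_integral_eq_of_lintegral_eq continuous_foldyIntegrand.aestronglyMeasurable
    (ae_restrict_of_forall_mem measurableSet_Ioi fun x _ => (foldyIntegrand_pos x).le)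
    (by positivity) lintegral_foldyIntegrand
end
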